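/- Let α, β ∈ (1,2) with α ≠ β, let d, e, ρ > 0, and set γ = min{α, β}. Then there exist real constants C₁, C₂ > 0 such that C₁ < limsup_{(θ₁,θ₂)→(0,0)} 𝓕_{(α,β)}(θ₁,θ₂)/((θ₁²+θ₂²)^{γ/2}) < C₂. Explicitly, if γ = α the limsup is at most -2d cos(απ/2) (a number in (0, 2d)), and if γ = β the limsup is at most -2eρ cos(βπ/2) (a number in (0, 2eρ)). -/

import Mathlib

open scoped Real Topology
open Filter

/-- Alternating fractional binomial coefficients. -/
noncomputable def gcoef (γ : ℝ) (k : ℕ) : ℝ :=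
  (-1 : ℝ) ^ k / (Nat.factorial k) * ∏ i ∈ Finset.range k, (γ - i)

/-- WSGD weights. -/
noncomputable def w (γ : ℝ) : ℕ → ℝ
  | 0 => γ / 2 * gcoef γ 0
  | (k + 1) => γ / 2 * gcoef γ (k + 1) + (2 - γ) / 2 * gcoef γ k

/-- The symbol `f_γ(ξ) = -∑_{k=-1}^∞ w_{k+1}^{(γ)} e^{ikξ}`. -/
noncomputable def fsym (γ : ℝ) (ξ : ℝ) : ℂ :=
  -∑' k : ℕ, (w γ k : ℂ) * Complex.exp (Complex.I * ((k : ℂ) - 1) * (ξ : ℂ))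

/-- `q_γ(ξ) = f_γ(ξ) + f_γ(-ξ)` (real-valued). -/
noncomputable def qsym (γ : ℝ) (ξ : ℝ) : ℂ := fsym γ ξ + fsym γ (-ξ)

/-- `𝓕_{(α,β)}(θ₁,θ₂) = d·q_α(θ₁) + e·ρ·q_β(θ₂)`. -/
noncomputable def Fsym (α β d e ρ : ℝ) (θ : ℝ × ℝ) : ℝ :=
  d * (qsym α θ.1).re + e * ρ * (qsym β θ.2).re

/-!
The `gcoef γ` are the coefficients of the binomial series `∑ gcoef γ k z^k = (1 - z)^γ`, and for
`γ ∈ [1, 2]` they are absolutely summable, so the identity holds on the whole closed unit disc.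
Summing the weights `w` on the unit circle then gives
`f_γ(ξ) = -e^{-iξ} (γ/2 + (2-γ)/2 · e^{iξ}) (1 - e^{iξ})^γ`, and since `1 - e^{iξ} ~ -iξ` we get
`q_γ(ξ) = 2 Re f_γ(ξ) ~ -2 cos(γπ/2) |ξ|^γ` as `ξ → 0`. In `𝓕_{(α,β)}` the term with the larger
exponent is negligible against `|θ|^{min(α,β)}`, while along the axis of the smaller exponent the
quotient tends to `-2d cos(απ/2)` (resp. `-2eρ cos(βπ/2)`). So the limsup equals that constant,
which lies in `(0, 2d)` (resp. `(0, 2eρ)`) because `cos(γπ/2) ∈ (-1, 0)` for `γ ∈ (1, 2)`.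
-/

open Complex (I)

lemma gcoef_zero (γ : ℝ) : gcoef γ 0 = 1 := by simp [gcoef]

lemma gcoef_succ (γ : ℝ) (k : ℕ) : gcoef γ (k + 1) = gcoef γ k * ((k - γ) / (k + 1)) := by
  simp only [gcoef, Finset.prod_range_succ, Nat.factorial_succ, pow_succ]
  push_cast
  field_simp
  ring

lemma gcoef_succ_eq_mul_gcoef_sub_one (γ : ℝ) (k : ℕ) :
    gcoef γ (k + 1) = -γ / (k + 1) * gcoef (γ - 1) k := by
  have hprod : ∏ i ∈ Finset.range (k + 1), (γ - i) = γ * ∏ i ∈ Finset.range k, (γ - 1 - i) := by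
    rw [Finset.prod_range_succ', mul_comm, Nat.cast_zero, sub_zero]
    exact congrArg (γ * ·) (Finset.prod_congr rfl fun i _ ↦ by push_cast; ring)
  simp only [gcoef, hprod, Nat.factorial_succ, pow_succ]
  push_cast
  field_simp

lemma abs_gcoef_le_div {μ : ℝ} (hμ0 : 0 ≤ μ) (hμ1 : μ ≤ 1) {n : ℕ} (hn : 1 ≤ n) :
    |gcoef μ n| ≤ μ / n := by
  induction n, hn using Nat.le_induction with
  | base => simp [gcoef_succ, gcoef_zero, abs_of_nonneg hμ0]
  | succ n hn ih =>
    have hn' : (1 : ℝ) ≤ n := by exact_mod_cast hn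
    have hfactor : 0 ≤ (n - μ) / (n + 1) := div_nonneg (by linarith) (by positivity)
    rw [gcoef_succ, abs_mul, abs_of_nonneg hfactor]
    calc |gcoef μ n| * ((n - μ) / (n + 1)) ≤ μ / n * ((n - μ) / (n + 1)) := by
          gcongr
      _ ≤ μ / (n + 1 : ℕ) := by
          push_cast
          rw [div_mul_div_comm, div_le_div_iff₀ (by positivity) (by positivity)]
          nlinarith [mul_nonneg (mul_nonneg hμ0 hμ0) (by positivity : (0 : ℝ) ≤ n + 1)]

lemma abs_gcoef_succ_le {γ : ℝ} (hγ1 : 1 ≤ γ) (hγ2 : γ ≤ 2) {n : ℕ} (hn : 1 ≤ n) :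
    |gcoef γ (n + 1)| ≤ γ * (γ - 1) * (1 / (n : ℝ) ^ 2) := by
  have hn' : (1 : ℝ) ≤ n := by exact_mod_cast hn
  rw [gcoef_succ_eq_mul_gcoef_sub_one, abs_mul, abs_div, abs_neg, abs_of_nonneg (by linarith),
    abs_of_pos (by positivity : (0 : ℝ) < n + 1)]
  calc γ / (n + 1) * |gcoef (γ - 1) n| ≤ γ / (n + 1) * ((γ - 1) / n) := by
        gcongr
        exact abs_gcoef_le_div (by linarith) (by linarith) hn
    _ ≤ γ * (γ - 1) * (1 / (n : ℝ) ^ 2) := by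
        rw [div_mul_div_comm, mul_one_div]
        gcongr
        nlinarith

lemma summable_abs_gcoef {γ : ℝ} (hγ1 : 1 ≤ γ) (hγ2 : γ ≤ 2) :
    Summable fun n ↦ |gcoef γ n| := by
  rw [← summable_nat_add_iff 1]
  refine Summable.of_norm_bounded_eventually_nat
    ((Real.summable_one_div_nat_pow.2 one_lt_two).mul_left (γ * (γ - 1))) ?_
  filter_upwards [eventually_ge_atTop 1] with n hn
  simpa using abs_gcoef_succ_le hγ1 hγ2 hn

lemma gcoef_eq_neg_one_pow_mul_choose (γ : ℝ) (k : ℕ) :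
    gcoef γ k = (-1) ^ k * Ring.choose γ k := by
  have h := Ring.descPochhammer_eq_factorial_smul_choose γ k
  rw [← Polynomial.aeval_eq_smeval, ← Polynomial.aeval_map_algebraMap ℝ, descPochhammer_map,
    Polynomial.aeval_def, Polynomial.eval₂_eq_eval_map, Algebra.algebraMap_self,
    Polynomial.map_id, descPochhammer_eval_eq_prod_range, nsmul_eq_mul] at h
  rw [gcoef, h]
  field_simp

lemma hasSum_gcoef_mul_pow (γ : ℝ) {z : ℂ} (hz : ‖z‖ < 1) :
    HasSum (fun k ↦ (gcoef γ k : ℂ) * z ^ k) ((1 - z) ^ (γ : ℂ)) := by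
  have h := (Complex.one_add_cpow_hasFPowerSeriesOnBall_zero (a := γ)).hasSum
    (y := -z) (by simpa [← ENNReal.ofReal_one, Metric.eball_ofReal] using hz)
  rw [zero_add, ← sub_eq_add_neg] at h
  refine h.congr_fun fun k ↦ ?_
  rw [gcoef_eq_neg_one_pow_mul_choose, binomialSeries_apply]
  simp only [List.ofFn_const, List.prod_replicate, smul_eq_mul, Complex.ofReal_mul,
    Complex.ofReal_pow, Complex.ofReal_neg, Complex.ofReal_one, Complex.ofReal_choose, neg_pow z]
  ring

lemma norm_gcoef_mul_pow_le (γ : ℝ) (k : ℕ) {z : ℂ} (hz : ‖z‖ ≤ 1) :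
    ‖(gcoef γ k : ℂ) * z ^ k‖ ≤ |gcoef γ k| := by
  rw [norm_mul, norm_pow, Complex.norm_real, Real.norm_eq_abs]
  exact mul_le_of_le_one_right (abs_nonneg _) (pow_le_one₀ (norm_nonneg z) hz)

lemma hasSum_gcoef_mul_pow_of_norm_le {γ : ℝ} (hγ1 : 1 ≤ γ) (hγ2 : γ ≤ 2) {z : ℂ}
    (hz : ‖z‖ ≤ 1) : HasSum (fun k ↦ (gcoef γ k : ℂ) * z ^ k) ((1 - z) ^ (γ : ℂ)) := by
  have hsummable : Summable fun k ↦ (gcoef γ k : ℂ) * z ^ k :=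
    .of_norm_bounded (summable_abs_gcoef hγ1 hγ2) fun k ↦ norm_gcoef_mul_pow_le γ k hz
  have hcontSum : ContinuousOn (fun z : ℂ ↦ ∑' k, (gcoef γ k : ℂ) * z ^ k)
      (Metric.closedBall 0 1) :=
    continuousOn_tsum (fun k ↦ by fun_prop) (summable_abs_gcoef hγ1 hγ2)
      fun k z hz ↦ norm_gcoef_mul_pow_le γ k (mem_closedBall_zero_iff.1 hz)
  have hcontPow : ContinuousOn (fun z : ℂ ↦ (1 - z) ^ (γ : ℂ)) (Metric.closedBall 0 1) := by
    intro z hz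
    have hre : 0 ≤ (1 - z).re := by
      simpa using (Complex.re_le_norm z).trans (mem_closedBall_zero_iff.1 hz)
    exact ((Complex.continuousAt_cpow_const_of_re_pos (Or.inl hre)
      (by rw [Complex.ofReal_re]; linarith)).comp
      (by fun_prop)).continuousWithinAt
  have heq := Set.EqOn.of_subset_closure
    (fun z hz ↦ (hasSum_gcoef_mul_pow γ (mem_ball_zero_iff.1 hz)).tsum_eq) hcontSum hcontPow
    Metric.ball_subset_closedBall (closure_ball (0 : ℂ) one_ne_zero).ge
  simpa [heq (mem_closedBall_zero_iff.2 hz)] using hsummable.hasSum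

lemma hasSum_w_mul_pow {γ : ℝ} (hγ1 : 1 ≤ γ) (hγ2 : γ ≤ 2) {z : ℂ} (hz : ‖z‖ ≤ 1) :
    HasSum (fun k ↦ (w γ k : ℂ) * z ^ k)
      (((γ : ℂ) / 2 + (2 - γ) / 2 * z) * (1 - z) ^ (γ : ℂ)) := by
  have hg := hasSum_gcoef_mul_pow_of_norm_le hγ1 hγ2 hz
  have hshift := (hasSum_nat_add_iff' 1).2 hg
  have hsum := (hshift.mul_left ((γ : ℂ) / 2)).add (hg.mul_left ((2 - γ) / 2 * z))
  have hterm (k : ℕ) : (w γ (k + 1) : ℂ) * z ^ (k + 1) = γ / 2 * ((gcoef γ (k + 1) : ℂ) *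
      z ^ (k + 1)) + (2 - γ) / 2 * z * ((gcoef γ k : ℂ) * z ^ k) := by
    simp only [w, pow_succ]
    push_cast
    ring
  refine (hasSum_nat_add_iff' 1).1 ?_
  convert hsum.congr_fun hterm using 1
  · rfl
  · simp only [Finset.range_one, Finset.sum_singleton, w, gcoef_zero, pow_zero, mul_one,
      Complex.ofReal_div, Complex.ofReal_ofNat, Complex.ofReal_one]
    ring

lemma fsym_eq {γ : ℝ} (hγ1 : 1 ≤ γ) (hγ2 : γ ≤ 2) (ξ : ℝ) :
    fsym γ ξ = -(Complex.exp (-(ξ * I)) * ((γ : ℂ) / 2 + (2 - γ) / 2 * Complex.exp (ξ * I)) *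
      (1 - Complex.exp (ξ * I)) ^ (γ : ℂ)) := by
  have hz : ‖Complex.exp (ξ * I)‖ ≤ 1 := by rw [Complex.norm_exp_ofReal_mul_I]
  rw [fsym, mul_assoc, ← ((hasSum_w_mul_pow hγ1 hγ2 hz).mul_left _).tsum_eq]
  congr 1
  refine tsum_congr fun k ↦ ?_
  rw [← Complex.exp_nat_mul, mul_left_comm, ← Complex.exp_add]
  ring_nf

lemma fsym_neg (γ ξ : ℝ) : fsym γ (-ξ) = starRingEnd ℂ (fsym γ ξ) := by
  rw [fsym, fsym, map_neg, Complex.conj_tsum]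
  congr 1
  refine tsum_congr fun k ↦ ?_
  rw [map_mul, Complex.conj_ofReal, ← Complex.exp_conj]
  simp only [map_mul, map_sub, Complex.conj_I, Complex.conj_ofReal, Complex.conj_natCast, map_one,
    Complex.ofReal_neg]
  ring_nf

lemma qsym_re (γ ξ : ℝ) : (qsym γ ξ).re = 2 * (fsym γ ξ).re := by
  rw [qsym, fsym_neg, Complex.add_re, Complex.conj_re]
  ring

lemma qsym_neg (γ ξ : ℝ) : qsym γ (-ξ) = qsym γ ξ := by
  rw [qsym, qsym, neg_neg, add_comm]

lemma qsym_zero {γ : ℝ} (hγ1 : 1 ≤ γ) (hγ2 : γ ≤ 2) : qsym γ 0 = 0 := by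
  have hγ : (γ : ℂ) ≠ 0 := by exact_mod_cast (by linarith : γ ≠ 0)
  simp [qsym, fsym_eq hγ1 hγ2, Complex.zero_cpow hγ]

lemma ofReal_mul_cpow {r : ℝ} (hr : 0 < r) (x s : ℂ) : ((r : ℂ) * x) ^ s = (r : ℂ) ^ s * x ^ s := by
  rcases eq_or_ne x 0 with rfl | hx
  · rcases eq_or_ne s 0 with rfl | hs
    · simp
    · simp [Complex.zero_cpow hs]
  have hr' : (r : ℂ) ≠ 0 := by exact_mod_cast hr.ne'
  rw [Complex.cpow_def_of_ne_zero (mul_ne_zero hr' hx), Complex.log_ofReal_mul hr hx,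
    Complex.cpow_def_of_ne_zero hr', Complex.cpow_def_of_ne_zero hx, ← Complex.exp_add,
    Complex.ofReal_log hr.le, add_mul]

lemma tendsto_one_sub_exp_mul_I_div :
    Tendsto (fun ξ : ℝ ↦ (1 - Complex.exp (ξ * I)) / ξ) (𝓝[≠] 0) (𝓝 (-I)) := by
  have hderiv : HasDerivAt (fun ξ : ℝ ↦ Complex.exp (ξ * I)) I 0 := by
    simpa using ((Complex.ofRealCLM.hasDerivAt (x := 0)).mul_const I).cexp
  refine ((hasDerivAt_iff_tendsto_slope.1 hderiv).neg).congr fun ξ ↦ ?_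
  simp [slope_def_module, Complex.real_smul, div_eq_inv_mul, mul_sub]

lemma re_neg_I_cpow (γ : ℝ) : ((-I) ^ (γ : ℂ)).re = Real.cos (γ * π / 2) := by
  rw [Complex.cpow_def_of_ne_zero (neg_ne_zero.2 Complex.I_ne_zero), Complex.log_neg_I,
    show -(π / 2 : ℂ) * I * γ = ((-(γ * π / 2) : ℝ) : ℂ) * I by push_cast; ring,
    Complex.exp_ofReal_mul_I_re, Real.cos_neg]

lemma tendsto_fsym_re_div_rpow {γ : ℝ} (hγ1 : 1 ≤ γ) (hγ2 : γ ≤ 2) :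
    Tendsto (fun ξ ↦ (fsym γ ξ).re / ξ ^ γ) (𝓝[>] 0) (𝓝 (-Real.cos (γ * π / 2))) := by
  set H : ℝ → ℂ := fun ξ ↦ -(Complex.exp (-(ξ * I)) *
    ((γ : ℂ) / 2 + (2 - γ) / 2 * Complex.exp (ξ * I)) * ((1 - Complex.exp (ξ * I)) / ξ) ^ (γ : ℂ))
  have hH : Tendsto H (𝓝[>] 0) (𝓝 (-(-I) ^ (γ : ℂ))) := by
    have hpow := (continuousAt_cpow_const (b := (γ : ℂ))
      (by simp [Complex.mem_slitPlane_iff])).tendsto.comp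
      (tendsto_one_sub_exp_mul_I_div.mono_left (nhdsGT_le_nhdsNE 0))
    have hcont : Continuous fun ξ : ℝ ↦
        Complex.exp (-(ξ * I)) * ((γ : ℂ) / 2 + (2 - γ) / 2 * Complex.exp (ξ * I)) := by
      fun_prop
    convert ((hcont.tendsto 0).mono_left nhdsWithin_le_nhds |>.mul hpow).neg using 2
    · rfl
    · simp only [Complex.ofReal_zero, zero_mul, neg_zero, Complex.exp_zero]
      ring
  have hre := (Complex.continuous_re.tendsto _).comp hH
  rw [Complex.neg_re, re_neg_I_cpow] at hre
  refine hre.congr' (eventually_mem_nhdsWithin.mono fun ξ (hξ : 0 < ξ) ↦ ?_)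
  have hfac : fsym γ ξ = ((ξ ^ γ : ℝ) : ℂ) * H ξ := by
    simp only [H, fsym_eq hγ1 hγ2, Complex.ofReal_cpow hξ.le]
    rw [← mul_div_cancel₀ (1 - Complex.exp (ξ * I)) (by exact_mod_cast hξ.ne' : (ξ : ℂ) ≠ 0),
      ofReal_mul_cpow hξ, mul_div_cancel_left₀ _ (by exact_mod_cast hξ.ne' : (ξ : ℂ) ≠ 0)]
    ring
  show (H ξ).re = (fsym γ ξ).re / ξ ^ γ
  rw [hfac, Complex.re_ofReal_mul, mul_div_cancel_left₀ _ (Real.rpow_pos_of_pos hξ γ).ne']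

lemma tendsto_qsym_re_div_abs_rpow {γ : ℝ} (hγ1 : 1 ≤ γ) (hγ2 : γ ≤ 2) :
    Tendsto (fun ξ ↦ (qsym γ ξ).re / |ξ| ^ γ) (𝓝[≠] 0) (𝓝 (-2 * Real.cos (γ * π / 2))) := by
  have h := ((tendsto_fsym_re_div_rpow hγ1 hγ2).const_mul 2).comp tendsto_abs_nhdsNE_zero
  rw [mul_neg, ← neg_mul] at h
  refine h.congr fun ξ ↦ ?_
  have heven : qsym γ |ξ| = qsym γ ξ := by
    rcases abs_choice ξ with hξ | hξ <;> rw [hξ]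
    exact qsym_neg γ ξ
  simp only [Function.comp_apply, ← heven, qsym_re, mul_div_assoc]

lemma sq_rpow_half (x a : ℝ) : (x ^ 2) ^ (a / 2) = |x| ^ a := by
  rw [← sq_abs, ← Real.rpow_natCast, ← Real.rpow_mul (abs_nonneg x), Nat.cast_ofNat,
    mul_div_cancel₀ a two_ne_zero]

lemma abs_rpow_le_rpow_half {x s a : ℝ} (hxs : x ^ 2 ≤ s) (ha : 0 ≤ a) :
    |x| ^ a ≤ s ^ (a / 2) := by
  rw [← sq_rpow_half]
  exact Real.rpow_le_rpow (sq_nonneg x) hxs (by linarith)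

lemma eventually_le_mul_abs_rpow {f : ℝ → ℝ} {a A C : ℝ} (ha : a ≠ 0)
    (hf : Tendsto (fun t ↦ f t / |t| ^ a) (𝓝[≠] 0) (𝓝 A)) (hf0 : f 0 = 0) (hAC : A < C) :
    ∀ᶠ t in 𝓝 0, f t ≤ C * |t| ^ a := by
  filter_upwards [eventually_nhdsWithin_iff.1 (hf.eventually_lt_const hAC)] with t ht
  rcases eq_or_ne t 0 with rfl | ht0
  · simp [hf0, Real.zero_rpow ha]
  · exact (div_le_iff₀ (Real.rpow_pos_of_pos (abs_pos.2 ht0) a)).1 (ht ht0).le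

lemma tendsto_prodMk_zero_nhdsNE :
    Tendsto (fun t : ℝ ↦ ((t, 0) : ℝ × ℝ)) (𝓝[≠] 0) (𝓝[≠] 0) := by
  refine tendsto_nhdsWithin_iff.2 ⟨?_, eventually_mem_nhdsWithin.mono fun t ht h ↦ ht ?_⟩
  · exact (Continuous.tendsto (by fun_prop) 0).mono_left nhdsWithin_le_nhds
  · exact congrArg Prod.fst h

section TwoExponents

variable {f g : ℝ → ℝ} {a b A B : ℝ}

lemma eventually_add_div_rpow_le (ha : 0 < a) (hab : a < b) (hA : 0 ≤ A)
    (hf : Tendsto (fun t ↦ f t / |t| ^ a) (𝓝[≠] 0) (𝓝 A)) (hf0 : f 0 = 0)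
    (hg : Tendsto (fun t ↦ g t / |t| ^ b) (𝓝[≠] 0) (𝓝 B)) (hg0 : g 0 = 0)
    {ε : ℝ} (hε : 0 < ε) :
    ∀ᶠ θ : ℝ × ℝ in 𝓝[≠] 0, (f θ.1 + g θ.2) / (θ.1 ^ 2 + θ.2 ^ 2) ^ (a / 2) ≤ A + ε := by
  set C := |B| + 1
  have hC : 0 ≤ C := by positivity
  have hfθ : ∀ᶠ θ : ℝ × ℝ in 𝓝 0, f θ.1 ≤ (A + ε / 2) * |θ.1| ^ a :=
    continuous_fst.tendsto (0 : ℝ × ℝ) |>.eventually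
      (eventually_le_mul_abs_rpow ha.ne' hf hf0 (by linarith))
  have hgθ : ∀ᶠ θ : ℝ × ℝ in 𝓝 0, g θ.2 ≤ C * |θ.2| ^ b :=
    continuous_snd.tendsto (0 : ℝ × ℝ) |>.eventually
      (eventually_le_mul_abs_rpow (by linarith) hg hg0 (by linarith [le_abs_self B]))
  have hsmall : ∀ᶠ θ : ℝ × ℝ in 𝓝 0, C * (θ.1 ^ 2 + θ.2 ^ 2) ^ ((b - a) / 2) < ε / 2 := by
    have hcont : Continuous fun θ : ℝ × ℝ ↦ C * (θ.1 ^ 2 + θ.2 ^ 2) ^ ((b - a) / 2) :=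
      continuous_const.mul ((Real.continuous_rpow_const (by linarith)).comp (by fun_prop))
    refine hcont.tendsto 0 |>.eventually_lt_const ?_
    simp [Real.zero_rpow (by linarith : (b - a) / 2 ≠ 0), hε]
  filter_upwards [nhdsWithin_le_nhds (hfθ.and (hgθ.and hsmall)), self_mem_nhdsWithin]
    with θ ⟨hfθ, hgθ, hsmall⟩ (hθ : θ ≠ 0)
  have hs : 0 < θ.1 ^ 2 + θ.2 ^ 2 := by
    have : θ.1 ≠ 0 ∨ θ.2 ≠ 0 := by
      contrapose! hθ
      exact Prod.ext hθ.1 hθ.2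
    rcases this with h | h <;> positivity
  have hsplit : (θ.1 ^ 2 + θ.2 ^ 2) ^ (b / 2)
      = (θ.1 ^ 2 + θ.2 ^ 2) ^ (a / 2) * (θ.1 ^ 2 + θ.2 ^ 2) ^ ((b - a) / 2) := by
    rw [← Real.rpow_add hs]
    ring_nf
  rw [div_le_iff₀ (Real.rpow_pos_of_pos hs _)]
  calc f θ.1 + g θ.2 ≤ (A + ε / 2) * (θ.1 ^ 2 + θ.2 ^ 2) ^ (a / 2)
        + C * (θ.1 ^ 2 + θ.2 ^ 2) ^ (b / 2) := by
        gcongr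
        · exact hfθ.trans (by gcongr; exact abs_rpow_le_rpow_half (by nlinarith) ha.le)
        · exact hgθ.trans (by gcongr; exact abs_rpow_le_rpow_half (by nlinarith) (by linarith))
    _ ≤ (A + ε) * (θ.1 ^ 2 + θ.2 ^ 2) ^ (a / 2) := by
        rw [hsplit]
        nlinarith [Real.rpow_pos_of_pos hs (a / 2)]

lemma limsup_add_div_rpow (ha : 0 < a) (hab : a < b) (hA : 0 ≤ A)
    (hf : Tendsto (fun t ↦ f t / |t| ^ a) (𝓝[≠] 0) (𝓝 A)) (hf0 : f 0 = 0)
    (hg : Tendsto (fun t ↦ g t / |t| ^ b) (𝓝[≠] 0) (𝓝 B)) (hg0 : g 0 = 0) :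
    limsup (fun θ : ℝ × ℝ ↦ (f θ.1 + g θ.2) / (θ.1 ^ 2 + θ.2 ^ 2) ^ (a / 2)) (𝓝[≠] 0) = A := by
  have hup {ε : ℝ} (hε : 0 < ε) := eventually_add_div_rpow_le ha hab hA hf hf0 hg hg0 hε
  have hlow {ε : ℝ} (hε : 0 < ε) : ∃ᶠ θ : ℝ × ℝ in 𝓝[≠] 0,
      A - ε ≤ (f θ.1 + g θ.2) / (θ.1 ^ 2 + θ.2 ^ 2) ^ (a / 2) := by
    have haxis : Tendsto (fun t ↦ (f t + g 0) / (t ^ 2 + 0 ^ 2) ^ (a / 2)) (𝓝[≠] 0) (𝓝 A) :=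
      hf.congr fun t ↦ by simp [hg0, sq_rpow_half]
    exact tendsto_prodMk_zero_nhdsNE.frequently
      ((haxis.eventually_const_lt (by linarith : A - ε < A)).mono fun _ h ↦ h.le).frequently
  apply le_antisymm
  · exact le_of_forall_pos_le_add fun ε hε ↦
      limsup_le_of_le (IsCoboundedUnder.of_frequently_ge (hlow one_pos)) (hup hε)
  · exact le_of_forall_sub_le fun ε hε ↦
      le_limsup_of_frequently_le (hlow hε) (isBoundedUnder_of_eventually_le (hup one_pos))

end TwoExponents

lemma limsup_comp_swap {X Y : Type*} [TopologicalSpace X] [Zero X]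
    [ConditionallyCompleteLattice Y] (u : X × X → Y) :
    limsup (u ∘ Prod.swap) (𝓝[≠] 0) = limsup u (𝓝[≠] 0) := by
  have hmap : map Prod.swap (𝓝[≠] (0 : X × X)) = 𝓝[≠] 0 := by
    simpa using (Homeomorph.prodComm X X).map_punctured_nhds_eq 0
  rw [limsup, limsup, ← map_map, hmap]

lemma cos_mul_pi_div_two_mem_Ioo {γ : ℝ} (hγ1 : 1 < γ) (hγ2 : γ < 2) :
    Real.cos (γ * π / 2) ∈ Set.Ioo (-1) 0 := by
  constructor
  · rw [← Real.cos_pi]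
    exact Real.cos_lt_cos_of_nonneg_of_le_pi (by positivity) le_rfl (by nlinarith [Real.pi_pos])
  · exact Real.cos_neg_of_pi_div_two_lt_of_lt (by nlinarith [Real.pi_pos])
      (by nlinarith [Real.pi_pos])

lemma limsup_Fsym_of_lt {α β d : ℝ} (hα1 : 1 ≤ α) (hβ2 : β ≤ 2) (hlt : α < β) (hd : 0 ≤ d)
    (e ρ : ℝ) :
    limsup (fun θ : ℝ × ℝ ↦ Fsym α β d e ρ θ / (θ.1 ^ 2 + θ.2 ^ 2) ^ (min α β / 2))
      (𝓝[≠] 0) = -2 * d * Real.cos (α * π / 2) := by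
  have hα2 : α ≤ 2 := by linarith
  have hβ1 : 1 ≤ β := by linarith
  have hmul {γ : ℝ} (hγ1 : 1 ≤ γ) (hγ2 : γ ≤ 2) (c : ℝ) :
      Tendsto (fun t ↦ c * (qsym γ t).re / |t| ^ γ) (𝓝[≠] 0)
        (𝓝 (-2 * c * Real.cos (γ * π / 2))) := by
    convert (tendsto_qsym_re_div_abs_rpow hγ1 hγ2).const_mul c using 2 <;> ring
  have hA : 0 ≤ -2 * d * Real.cos (α * π / 2) := by
    have := Real.cos_nonpos_of_pi_div_two_le_of_le (x := α * π / 2) (by nlinarith [Real.pi_pos])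
      (by nlinarith [Real.pi_pos])
    nlinarith
  rw [min_eq_left hlt.le]
  exact limsup_add_div_rpow (f := fun t ↦ d * (qsym α t).re) (g := fun t ↦ e * ρ * (qsym β t).re)
    (by linarith) hlt hA (hmul hα1 hα2 d) (by simp [qsym_zero hα1 hα2])
    (hmul hβ1 hβ2 (e * ρ)) (by simp [qsym_zero hβ1 hβ2])

lemma limsup_Fsym_of_gt {α β e ρ : ℝ} (hβ1 : 1 ≤ β) (hα2 : α ≤ 2) (hgt : β < α) (he : 0 ≤ e)
    (hρ : 0 ≤ ρ) (d : ℝ) :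
    limsup (fun θ : ℝ × ℝ ↦ Fsym α β d e ρ θ / (θ.1 ^ 2 + θ.2 ^ 2) ^ (min α β / 2))
      (𝓝[≠] 0) = -2 * e * ρ * Real.cos (β * π / 2) := by
  have hswap : (fun θ : ℝ × ℝ ↦ Fsym α β d e ρ θ / (θ.1 ^ 2 + θ.2 ^ 2) ^ (min α β / 2)) =
      (fun θ : ℝ × ℝ ↦ Fsym β α (e * ρ) 1 d θ / (θ.1 ^ 2 + θ.2 ^ 2) ^ (min β α / 2))
        ∘ Prod.swap := by
    funext θ
    simp only [Function.comp_apply, Fsym, Prod.fst_swap, Prod.snd_swap, min_comm α β]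
    ring_nf
  rw [hswap, limsup_comp_swap, limsup_Fsym_of_lt hβ1 hα2 hgt (mul_nonneg he hρ)]
  ring

/-- The limsup of `𝓕_{(α,β)}(θ)/|θ|^γ` with `γ = min{α,β}` as `θ → (0,0)` is bounded
between two positive constants; explicitly it is at most `-2d·cos(απ/2) ∈ (0,2d)` when
`γ = α` and at most `-2eρ·cos(βπ/2) ∈ (0,2eρ)` when `γ = β`. -/
theorem Fsym_limsup_bounded (α β d e ρ : ℝ)
    (hα : α ∈ Set.Ioo (1 : ℝ) 2) (hβ : β ∈ Set.Ioo (1 : ℝ) 2) (hαβ : α ≠ β)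
    (hd : 0 < d) (he : 0 < e) (hρ : 0 < ρ) :
    ∃ C₁ C₂ : ℝ, 0 < C₁ ∧ 0 < C₂ ∧
      C₁ < limsup (fun θ : ℝ × ℝ =>
          Fsym α β d e ρ θ / (θ.1 ^ 2 + θ.2 ^ 2) ^ (min α β / 2)) (𝓝[≠] (0 : ℝ × ℝ)) ∧
      limsup (fun θ : ℝ × ℝ =>
          Fsym α β d e ρ θ / (θ.1 ^ 2 + θ.2 ^ 2) ^ (min α β / 2)) (𝓝[≠] (0 : ℝ × ℝ)) < C₂ ∧
      (min α β = α →
        limsup (fun θ : ℝ × ℝ =>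
            Fsym α β d e ρ θ / (θ.1 ^ 2 + θ.2 ^ 2) ^ (min α β / 2)) (𝓝[≠] (0 : ℝ × ℝ))
          ≤ -2 * d * Real.cos (α * Real.pi / 2) ∧
        -2 * d * Real.cos (α * Real.pi / 2) ∈ Set.Ioo 0 (2 * d)) ∧
      (min α β = β →
        limsup (fun θ : ℝ × ℝ =>
            Fsym α β d e ρ θ / (θ.1 ^ 2 + θ.2 ^ 2) ^ (min α β / 2)) (𝓝[≠] (0 : ℝ × ℝ))
          ≤ -2 * e * ρ * Real.cos (β * Real.pi / 2) ∧
        -2 * e * ρ * Real.cos (β * Real.pi / 2) ∈ Set.Ioo 0 (2 * e * ρ)) := by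
  obtain ⟨hα1, hα2⟩ := hα
  obtain ⟨hβ1, hβ2⟩ := hβ
  rcases hαβ.lt_or_gt with hlt | hgt
  · obtain ⟨hcos1, hcos0⟩ := cos_mul_pi_div_two_mem_Ioo hα1 hα2
    have hL : -2 * d * Real.cos (α * π / 2) ∈ Set.Ioo 0 (2 * d) := ⟨by nlinarith, by nlinarith⟩
    rw [limsup_Fsym_of_lt hα1.le hβ2.le hlt hd.le]
    exact ⟨_, _, half_pos hL.1, by linarith [hL.1], half_lt_self hL.1, lt_add_one _,
      fun _ ↦ ⟨le_rfl, hL⟩, fun h ↦ absurd (h.symm.trans (min_eq_left hlt.le)) hlt.ne'⟩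
  · obtain ⟨hcos1, hcos0⟩ := cos_mul_pi_div_two_mem_Ioo hβ1 hβ2
    have heρ : 0 < e * ρ := mul_pos he hρ
    have hL : -2 * e * ρ * Real.cos (β * π / 2) ∈ Set.Ioo 0 (2 * e * ρ) :=
      ⟨by nlinarith, by nlinarith⟩
    rw [limsup_Fsym_of_gt hβ1.le hα2.le hgt he.le hρ.le]
    exact ⟨_, _, half_pos hL.1, by linarith [hL.1], half_lt_self hL.1, lt_add_one _,
      fun h ↦ absurd (h.symm.trans (min_eq_right hgt.le)) hgt.ne', fun _ ↦ ⟨le_rfl, hL⟩⟩
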